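/- Define the HC2 cluster-robust covariance of the aggregate regression as Ṽ_ag2 = (D_agᵀD_ag)^{-1}(Σ_w D_ag,wᵀ(I−P_ag,w)^{-1/2} e_ag,w e_ag,wᵀ (I−P_ag,w)^{-1/2} D_ag,w)(D_agᵀD_ag)^{-1}, where P_ag,w = D_ag,w(D_agᵀD_ag)^{-1}D_ag,wᵀ, and define Ṽ_ols2 analogously for the unweighted unit regression with P_ols,w = D_w(DᵀD)^{-1}D_wᵀ. Then for every realization of the 2^2 split-plot assignment, Ṽ_ag2 = V̂_ht exactly; and under the uniform design condition, Ṽ_ols2 = Ṽ_ag2 = V̂, where V̂ denotes the common value of V̂_ht and V̂_haj. -/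

import Mathlib

open Finset Matrix Filter
open scoped Classical BigOperators

noncomputable section

namespace SplitPlotPaper

/-- The set of treatment combinations `T = {0,1} × {0,1}`, a pair of the levels of
factor A and factor B. -/
abbrev T : Type := Bool × Bool

section LS

variable {ι κ γ : Type*} [Fintype ι] [Fintype κ] [DecidableEq κ] [Fintype γ] [DecidableEq γ]

/-- The Gram matrix `Dᵀ Π D` of a (weighted) least-squares problem with design matrix `X`
and weights `π`. -/
def gram (X : Matrix ι κ ℝ) (π : ι → ℝ) : Matrix κ κ ℝ :=
  Matrix.of fun k k' => ∑ i, π i * X i k * X i k'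

/-- The (weighted) least-squares coefficient vector `(DᵀΠD)⁻¹ DᵀΠY`. -/
def lsCoef (X : Matrix ι κ ℝ) (π y : ι → ℝ) : κ → ℝ :=
  (gram X π)⁻¹.mulVec fun k => ∑ i, π i * X i k * y i

/-- Residuals of the (weighted) least-squares fit. -/
def lsResid (X : Matrix ι κ ℝ) (π y : ι → ℝ) (i : ι) : ℝ :=
  y i - ∑ k, X i k * lsCoef X π y k

/-- The cluster-robust covariance matrix
`(DᵀΠD)⁻¹ (Σ_c D_cᵀΠ_c e_c e_cᵀ Π_c D_c) (DᵀΠD)⁻¹` for clustering map `c`. -/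
def clusterCov (X : Matrix ι κ ℝ) (π y : ι → ℝ) (c : ι → γ) : Matrix κ κ ℝ :=
  (gram X π)⁻¹ *
    (Matrix.of fun k k' =>
      ∑ g : γ, (∑ i, if c i = g then π i * X i k * lsResid X π y i else 0) *
        (∑ i, if c i = g then π i * X i k' * lsResid X π y i else 0)) *
    (gram X π)⁻¹

/-- The heteroskedasticity-robust (sandwich) covariance matrix. -/
def hcCov (X : Matrix ι κ ℝ) (π y : ι → ℝ) : Matrix κ κ ℝ :=
  (gram X π)⁻¹ *
    (Matrix.of fun k k' => ∑ i, (π i) ^ 2 * (lsResid X π y i) ^ 2 * X i k * X i k') *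
    (gram X π)⁻¹

end LS

/-- A `2²` split-plot design: `W = W0 + W1` whole-plots, whole-plot `w` containing
`M w = M0 w + M1 w` sub-plots, together with fixed potential outcomes `Y`. -/
structure Design where
  W0 : ℕ
  W1 : ℕ
  hW0 : 2 ≤ W0
  hW1 : 2 ≤ W1
  M0 : Fin (W0 + W1) → ℕ
  M1 : Fin (W0 + W1) → ℕ
  hM0 : ∀ w, 2 ≤ M0 w
  hM1 : ∀ w, 2 ≤ M1 w
  Y : (w : Fin (W0 + W1)) → Fin (M0 w + M1 w) → T → ℝ

namespace Design

variable (d : Design)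

/-- Number of whole-plots. -/
abbrev W : ℕ := d.W0 + d.W1

/-- Size of whole-plot `w`. -/
abbrev M (w : Fin d.W) : ℕ := d.M0 w + d.M1 w

/-- Total number of units. -/
def N : ℕ := ∑ w, d.M w

/-- Number of whole-plots assigned level `a` of factor A. -/
def Wa (a : Bool) : ℕ := if a then d.W1 else d.W0

/-- Number of units of whole-plot `w` assigned level `b` of factor B. -/
def Mb (w : Fin d.W) (b : Bool) : ℕ := if b then d.M1 w else d.M0 w

/-- `p_a = W_a / W`. -/
def p (a : Bool) : ℝ := (d.Wa a : ℝ) / (d.W : ℝ)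

/-- `q_{wb} = M_{wb} / M_w`. -/
def q (w : Fin d.W) (b : Bool) : ℝ := (d.Mb w b : ℝ) / (d.M w : ℝ)

/-- Inclusion probability `p_{ws}(z) = p_a q_{wb}` for `z = (a,b)`. -/
def prob (w : Fin d.W) (z : T) : ℝ := d.p z.1 * d.q w z.2

/-- Whole-plot size factor `α_w = W M_w / N`. -/
def alpha (w : Fin d.W) : ℝ := (d.W : ℝ) * (d.M w : ℝ) / (d.N : ℝ)

/-- An assignment: a level of factor A for each whole-plot and a level of factor B
for each unit. -/
abbrev Assign : Type := (Fin d.W → Bool) × ((w : Fin d.W) → Fin (d.M w) → Bool)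

/-- The set of assignments realizable under split-plot randomization: exactly `W1`
whole-plots receive level 1 of factor A, and exactly `M1 w` units of whole-plot `w`
receive level 1 of factor B.  Split-plot randomization is uniform on this set. -/
def Ω : Finset d.Assign :=
  Finset.univ.filter fun ω =>
    ((Finset.univ.filter fun w => ω.1 w = true).card = d.W1) ∧
    (∀ w, (Finset.univ.filter fun s => ω.2 w s = true).card = d.M1 w)

/-- Design-based expectation: average over the uniform distribution on `Ω`. -/
def expect (f : d.Assign → ℝ) : ℝ := (∑ ω ∈ d.Ω, f ω) / (d.Ω.card : ℝ)

/-- Design-based covariance. -/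
def cov (f g : d.Assign → ℝ) : ℝ :=
  d.expect (fun ω => f ω * g ω) - d.expect f * d.expect g

/-- Conditional expectation given an event `E` on assignments. -/
def cexpect (E : d.Assign → Prop) (f : d.Assign → ℝ) : ℝ :=
  (∑ ω ∈ d.Ω.filter E, f ω) / ((d.Ω.filter E).card : ℝ)

/-- Conditional covariance given an event `E` on assignments. -/
def ccov (E : d.Assign → Prop) (f g : d.Assign → ℝ) : ℝ :=
  d.cexpect E (fun ω => f ω * g ω) - d.cexpect E f * d.cexpect E g

/-- Treatment `Z_{ws} = (A_w, B_{ws})` received by unit `(w,s)`. -/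
def Z (ω : d.Assign) (w : Fin d.W) (s : Fin (d.M w)) : T := (ω.1 w, ω.2 w s)

/-- Observed outcome `Y_{ws} = Y_{ws}(Z_{ws})`. -/
def Yobs (ω : d.Assign) (w : Fin d.W) (s : Fin (d.M w)) : ℝ := d.Y w s (d.Z ω w s)

/-- Horvitz–Thompson estimator `Ŷ_ht(z)`. -/
def Yht (ω : d.Assign) (z : T) : ℝ :=
  (d.N : ℝ)⁻¹ * ∑ w, ∑ s, if d.Z ω w s = z then (d.prob w z)⁻¹ * d.Yobs ω w s else 0

/-- `1̂_ht(z)`: the Horvitz–Thompson estimator of the constant 1. -/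
def oneHt (ω : d.Assign) (z : T) : ℝ :=
  (d.N : ℝ)⁻¹ * ∑ w, ∑ s, if d.Z ω w s = z then (d.prob w z)⁻¹ else 0

/-- Hajek estimator `Ŷ_haj(z) = Ŷ_ht(z)/1̂_ht(z)`. -/
def Yhaj (ω : d.Assign) (z : T) : ℝ := d.Yht ω z / d.oneHt ω z

/-- Sample-mean estimator `Ŷ_sm(z)`. -/
def Ysm (ω : d.Assign) (z : T) : ℝ :=
  (∑ w, ∑ s, if d.Z ω w s = z then d.Yobs ω w s else 0) /
    (∑ w, ∑ s, if d.Z ω w s = z then (1 : ℝ) else 0)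

/-- Whole-plot sample mean `Ŷ_w(z)` (zero when whole-plot `w` has no units under `z`). -/
def Yw (ω : d.Assign) (w : Fin d.W) (z : T) : ℝ :=
  (d.Mb w z.2 : ℝ)⁻¹ * ∑ s, if d.Z ω w s = z then d.Yobs ω w s else 0

/-- Scaled whole-plot sample mean `Û_w(z) = α_w Ŷ_w(z)`. -/
def Uw (ω : d.Assign) (w : Fin d.W) (z : T) : ℝ := d.alpha w * d.Yw ω w z

/-- Finite-population average `Ȳ(z)`. -/
def Ybar (z : T) : ℝ := (d.N : ℝ)⁻¹ * ∑ w, ∑ s, d.Y w s z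

/-- Whole-plot average potential outcome `Ȳ_w(z)`. -/
def Ybarw (w : Fin d.W) (z : T) : ℝ := (d.M w : ℝ)⁻¹ * ∑ s, d.Y w s z

/-- Scaled whole-plot total `U_w(z) = α_w Ȳ_w(z)`. -/
def U (w : Fin d.W) (z : T) : ℝ := d.alpha w * d.Ybarw w z

/-- Between whole-plot covariance `S_ht(z,z')`. -/
def Sht (z z' : T) : ℝ :=
  ((d.W : ℝ) - 1)⁻¹ *
    ∑ w, (d.alpha w * d.Ybarw w z - d.Ybar z) * (d.alpha w * d.Ybarw w z' - d.Ybar z')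

/-- Between whole-plot covariance `S_haj(z,z')`. -/
def Shaj (z z' : T) : ℝ :=
  ((d.W : ℝ) - 1)⁻¹ *
    ∑ w, (d.alpha w) ^ 2 * (d.Ybarw w z - d.Ybar z) * (d.Ybarw w z' - d.Ybar z')

/-- Within whole-plot covariance `S_w(z,z')`. -/
def Sw (w : Fin d.W) (z z' : T) : ℝ :=
  ((d.M w : ℝ) - 1)⁻¹ * (d.alpha w) ^ 2 *
    ∑ s, (d.Y w s z - d.Ybarw w z) * (d.Y w s z' - d.Ybarw w z')

/-- Entry `(z,z')` of `H = diag(p₀⁻¹,p₁⁻¹) ⊗ J₂ − J₄`. -/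
def Hmat (z z' : T) : ℝ := (if z.1 = z'.1 then (d.p z.1)⁻¹ else 0) - 1

/-- Entry `(z,z')` of `H_w = diag(p₀⁻¹,p₁⁻¹) ⊗ (diag(q_{w0}⁻¹,q_{w1}⁻¹) − J₂)`,
i.e. `1(a=a')·p_a⁻¹·(q_{wb}⁻¹·1(z=z') − 1)`. -/
def Hw (w : Fin d.W) (z z' : T) : ℝ :=
  if z.1 = z'.1 then (d.p z.1)⁻¹ * ((if z = z' then (d.q w z.2)⁻¹ else 0) - 1) else 0

/-- `Ψ(z,z') = W⁻¹ Σ_w M_w⁻¹ H_w(z,z') S_w(z,z')`. -/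
def Psi (z z' : T) : ℝ := (d.W : ℝ)⁻¹ * ∑ w, (d.M w : ℝ)⁻¹ * d.Hw w z z' * d.Sw w z z'

/-- Sample analog `Ŝ_ht(z,z')` (for `z,z'` sharing the same A-level `z.1`). -/
def ShtHat (ω : d.Assign) (z z' : T) : ℝ :=
  ((d.Wa z.1 : ℝ) - 1)⁻¹ *
    ∑ w, if ω.1 w = z.1 then
        (d.alpha w * d.Yw ω w z - d.Yht ω z) * (d.alpha w * d.Yw ω w z' - d.Yht ω z')
      else 0

/-- Sample analog `Ŝ_haj(z,z')` (for `z,z'` sharing the same A-level `z.1`). -/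
def ShajHat (ω : d.Assign) (z z' : T) : ℝ :=
  ((d.Wa z.1 : ℝ) - 1)⁻¹ *
    ∑ w, if ω.1 w = z.1 then
        (d.alpha w) ^ 2 * (d.Yw ω w z - d.Yhaj ω z) * (d.Yw ω w z' - d.Yhaj ω z')
      else 0

/-- Covariance estimator `V̂_ht` (block-diagonal in the A-levels). -/
def Vht (ω : d.Assign) : Matrix T T ℝ :=
  Matrix.of fun z z' => if z.1 = z'.1 then (d.Wa z.1 : ℝ)⁻¹ * d.ShtHat ω z z' else 0

/-- Covariance estimator `V̂_haj` (block-diagonal in the A-levels). -/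
def Vhaj (ω : d.Assign) : Matrix T T ℝ :=
  Matrix.of fun z z' => if z.1 = z'.1 then (d.Wa z.1 : ℝ)⁻¹ * d.ShajHat ω z z' else 0

/-- Index set of units. -/
abbrev Idx : Type := (w : Fin d.W) × Fin (d.M w)

/-- Design matrix of the unit regression on the four treatment indicators. -/
def Dunit (ω : d.Assign) : Matrix d.Idx T ℝ :=
  Matrix.of fun i z => if d.Z ω i.1 i.2 = z then 1 else 0

/-- Observed outcome vector, indexed by units. -/
def Yv (ω : d.Assign) : d.Idx → ℝ := fun i => d.Yobs ω i.1 i.2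

/-- Inverse-probability weights `p_{ws}(Z_{ws})⁻¹`. -/
def wgt (ω : d.Assign) : d.Idx → ℝ := fun i => (d.prob i.1 (d.Z ω i.1 i.2))⁻¹

/-- Index set of the aggregate regression: pairs `(w,b)`. -/
abbrev AgIdx : Type := Fin d.W × Bool

/-- Design matrix of the aggregate regression on the four treatment indicators. -/
def Dag (ω : d.Assign) : Matrix d.AgIdx T ℝ :=
  Matrix.of fun i z => if (ω.1 i.1, i.2) = z then 1 else 0

/-- Outcome vector of the aggregate regression: `Û_w((A_w, b))`. -/
def Uag (ω : d.Assign) : d.AgIdx → ℝ := fun i => d.Uw ω i.1 (ω.1 i.1, i.2)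

/-- Clustering of units by whole-plot. -/
def clUnit : d.Idx → Fin d.W := fun i => i.1

/-- Clustering of aggregate observations by whole-plot. -/
def clAg : d.AgIdx → Fin d.W := fun i => i.1

/-- OLS coefficients `β_ols` of the unit regression. -/
def betaOls (ω : d.Assign) : T → ℝ := lsCoef (d.Dunit ω) (fun _ => 1) (d.Yv ω)

/-- WLS coefficients `β_wls` of the unit regression with inverse probability weights. -/
def betaWls (ω : d.Assign) : T → ℝ := lsCoef (d.Dunit ω) (d.wgt ω) (d.Yv ω)

/-- OLS coefficients `β_ag` of the aggregate regression. -/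
def betaAg (ω : d.Assign) : T → ℝ := lsCoef (d.Dag ω) (fun _ => 1) (d.Uag ω)

/-- Cluster-robust covariance `Ṽ_ols` of the unweighted unit regression. -/
def Vols (ω : d.Assign) : Matrix T T ℝ :=
  clusterCov (d.Dunit ω) (fun _ => 1) (d.Yv ω) d.clUnit

/-- Cluster-robust covariance `Ṽ_wls` of the weighted unit regression. -/
def Vwls (ω : d.Assign) : Matrix T T ℝ :=
  clusterCov (d.Dunit ω) (d.wgt ω) (d.Yv ω) d.clUnit

/-- Cluster-robust covariance `Ṽ_ag` of the aggregate regression. -/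
def VagCR (ω : d.Assign) : Matrix T T ℝ :=
  clusterCov (d.Dag ω) (fun _ => 1) (d.Uag ω) d.clAg

section Covariates

variable {J : ℕ}

/-- Horvitz–Thompson estimator of the covariate means. -/
def xht (x : (w : Fin d.W) → Fin (d.M w) → Fin J → ℝ) (ω : d.Assign) (z : T) (j : Fin J) : ℝ :=
  (d.N : ℝ)⁻¹ * ∑ w, ∑ s, if d.Z ω w s = z then (d.prob w z)⁻¹ * x w s j else 0

/-- Hajek estimator of the covariate means. -/
def xhaj (x : (w : Fin d.W) → Fin (d.M w) → Fin J → ℝ) (ω : d.Assign) (z : T) (j : Fin J) : ℝ :=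
  d.xht x ω z j / d.oneHt ω z

/-- Sample-mean estimator of the covariate means. -/
def xsm (x : (w : Fin d.W) → Fin (d.M w) → Fin J → ℝ) (ω : d.Assign) (z : T) (j : Fin J) : ℝ :=
  (∑ w, ∑ s, if d.Z ω w s = z then x w s j else 0) /
    (∑ w, ∑ s, if d.Z ω w s = z then (1 : ℝ) else 0)

/-- Whole-plot sample mean of the covariates `x̂_w(z)`. -/
def xw (x : (w : Fin d.W) → Fin (d.M w) → Fin J → ℝ) (ω : d.Assign) (w : Fin d.W) (z : T)
    (j : Fin J) : ℝ :=
  (d.Mb w z.2 : ℝ)⁻¹ * ∑ s, if d.Z ω w s = z then x w s j else 0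

/-- Scaled whole-plot covariate total `v̂_w(z) = α_w x̂_w(z)`. -/
def vw (x : (w : Fin d.W) → Fin (d.M w) → Fin J → ℝ) (ω : d.Assign) (w : Fin d.W) (z : T)
    (j : Fin J) : ℝ :=
  d.alpha w * d.xw x ω w z j

/-- Design matrix of the additive covariate-adjusted unit regression. -/
def DunitF (x : (w : Fin d.W) → Fin (d.M w) → Fin J → ℝ) (ω : d.Assign) :
    Matrix d.Idx (T ⊕ Fin J) ℝ :=
  Matrix.of fun i k =>
    Sum.elim (fun z => if d.Z ω i.1 i.2 = z then (1 : ℝ) else 0) (fun j => x i.1 i.2 j) k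

/-- Design matrix of the additive covariate-adjusted aggregate regression. -/
def DagF (x : (w : Fin d.W) → Fin (d.M w) → Fin J → ℝ) (ω : d.Assign) :
    Matrix d.AgIdx (T ⊕ Fin J) ℝ :=
  Matrix.of fun i k =>
    Sum.elim (fun z => if (ω.1 i.1, i.2) = z then (1 : ℝ) else 0)
      (fun j => d.vw x ω i.1 (ω.1 i.1, i.2) j) k

/-- Design matrix of the fully-interacted covariate-adjusted unit regression. -/
def DunitL (x : (w : Fin d.W) → Fin (d.M w) → Fin J → ℝ) (ω : d.Assign) :
    Matrix d.Idx (T ⊕ T × Fin J) ℝ :=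
  Matrix.of fun i k =>
    Sum.elim (fun z => if d.Z ω i.1 i.2 = z then (1 : ℝ) else 0)
      (fun zj => if d.Z ω i.1 i.2 = zj.1 then x i.1 i.2 zj.2 else 0) k

/-- Design matrix of the fully-interacted covariate-adjusted aggregate regression. -/
def DagL (x : (w : Fin d.W) → Fin (d.M w) → Fin J → ℝ) (ω : d.Assign) :
    Matrix d.AgIdx (T ⊕ T × Fin J) ℝ :=
  Matrix.of fun i k =>
    Sum.elim (fun z => if (ω.1 i.1, i.2) = z then (1 : ℝ) else 0)
      (fun zj => if (ω.1 i.1, i.2) = zj.1 then d.vw x ω i.1 (ω.1 i.1, i.2) zj.2 else 0) k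

end Covariates

/-- Centered factor-A indicator `A_w − 1/2`. -/
def Ac (ω : d.Assign) (w : Fin d.W) : ℝ := (if ω.1 w then 1 else 0) - 1 / 2

/-- Centered factor-B indicator `B_{ws} − 1/2`. -/
def Bcu (ω : d.Assign) (i : d.Idx) : ℝ := (if ω.2 i.1 i.2 then 1 else 0) - 1 / 2

/-- Design matrix of the factor-based unit regression
`Y ~ 1 + (A−1/2) + (B−1/2) + (A−1/2)(B−1/2)`. -/
def Funit (ω : d.Assign) : Matrix d.Idx (Fin 4) ℝ :=
  Matrix.of fun i => ![1, d.Ac ω i.1, d.Bcu ω i, d.Ac ω i.1 * d.Bcu ω i]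

/-- Design matrix of the factor-based aggregate regression
`Û ~ 1 + (A−1/2) + (b−1/2) + (A−1/2)(b−1/2)`. -/
def Fag (ω : d.Assign) : Matrix d.AgIdx (Fin 4) ℝ :=
  Matrix.of fun i =>
    ![1, d.Ac ω i.1, (if i.2 then 1 else 0) - 1 / 2,
      d.Ac ω i.1 * ((if i.2 then 1 else 0) - 1 / 2)]

end Design

/-- The contrast matrix `G₀` with rows `g_A`, `g_B`, `g_AB`. -/
def G0 : Matrix (Fin 3) T ℝ :=
  Matrix.of fun k z =>
    ![(if z.1 then (1 : ℝ) else -1) / 2,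
      (if z.2 then (1 : ℝ) else -1) / 2,
      (if z.1 then (-1 : ℝ) else 1) * (if z.2 then (-1 : ℝ) else 1)] k


namespace Design

variable (d : Design)

/-- The two rows of the aggregate design matrix belonging to whole-plot `w`. -/
def DagBlock (ω : d.Assign) (w : Fin d.W) : Matrix Bool T ℝ :=
  Matrix.of fun b z => d.Dag ω (w, b) z

/-- The leverage block `P_ag,w = D_ag,w (D_agᵀ D_ag)⁻¹ D_ag,wᵀ`. -/
def PagBlock (ω : d.Assign) (w : Fin d.W) : Matrix Bool Bool ℝ :=
  d.DagBlock ω w * (gram (d.Dag ω) fun _ => 1)⁻¹ * (d.DagBlock ω w)ᵀ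

/-- The residuals of the aggregate regression in whole-plot `w`. -/
def eAg (ω : d.Assign) (w : Fin d.W) : Bool → ℝ :=
  fun b => lsResid (d.Dag ω) (fun _ => 1) (d.Uag ω) (w, b)

/-- The HC2 cluster-robust covariance of the aggregate regression, where `Q w` is the
positive-semidefinite square root of `I − P_ag,w`, so that `(Q w)⁻¹ = (I−P_ag,w)^{-1/2}`. -/
def Vag2 (ω : d.Assign) (Q : Fin d.W → Matrix Bool Bool ℝ) : Matrix T T ℝ :=
  (gram (d.Dag ω) fun _ => 1)⁻¹ *
    (Matrix.of fun z z' =>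
      ∑ w, ((d.DagBlock ω w)ᵀ.mulVec ((Q w)⁻¹.mulVec (d.eAg ω w))) z *
           ((d.DagBlock ω w)ᵀ.mulVec ((Q w)⁻¹.mulVec (d.eAg ω w))) z') *
    (gram (d.Dag ω) fun _ => 1)⁻¹

/-- The rows of the unit design matrix belonging to whole-plot `w`. -/
def DunitBlock (ω : d.Assign) (w : Fin d.W) : Matrix (Fin (d.M w)) T ℝ :=
  Matrix.of fun s z => d.Dunit ω ⟨w, s⟩ z

/-- The leverage block `P_ols,w = D_w (Dᵀ D)⁻¹ D_wᵀ`. -/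
def PunitBlock (ω : d.Assign) (w : Fin d.W) : Matrix (Fin (d.M w)) (Fin (d.M w)) ℝ :=
  d.DunitBlock ω w * (gram (d.Dunit ω) fun _ => 1)⁻¹ * (d.DunitBlock ω w)ᵀ

/-- The residuals of the unweighted unit regression in whole-plot `w`. -/
def eUnit (ω : d.Assign) (w : Fin d.W) : Fin (d.M w) → ℝ :=
  fun s => lsResid (d.Dunit ω) (fun _ => 1) (d.Yv ω) ⟨w, s⟩

/-- The HC2 cluster-robust covariance of the unweighted unit regression, where `Q w` is
the positive-semidefinite square root of `I − P_ols,w`. -/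
def Vols2 (ω : d.Assign) (Q : (w : Fin d.W) → Matrix (Fin (d.M w)) (Fin (d.M w)) ℝ) :
    Matrix T T ℝ :=
  (gram (d.Dunit ω) fun _ => 1)⁻¹ *
    (Matrix.of fun z z' =>
      ∑ w, ((d.DunitBlock ω w)ᵀ.mulVec ((Q w)⁻¹.mulVec (d.eUnit ω w))) z *
           ((d.DunitBlock ω w)ᵀ.mulVec ((Q w)⁻¹.mulVec (d.eUnit ω w))) z') *
    (gram (d.Dunit ω) fun _ => 1)⁻¹

end Design

/-!
Both regressions regress on the one-hot indicators of the four treatment cells, so their Gram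
matrices are diagonal and their coefficients are cell means; for the aggregate regression (and,
under the uniform design, for the unit regression) these means are `Ŷ_ht`. Every whole-plot
leverage block satisfies `P_w D_w = W_a⁻¹ D_w`, where `a` is the A-level of `w`, so the columns
of `D_w` are eigenvectors of `I − P_w` with eigenvalue `1 − W_a⁻¹` and the HC2 factor
`(I − P_w)^{-1/2}` acts on them as the scalar `(1 − W_a⁻¹)^{-1/2}`. The sandwich then collapses to
`Σ_w (W_a (W_a − 1))⁻¹ r_w r_wᵀ` with `r_w` the aggregate residuals of whole-plot `w`, which is
`V̂_ht`. Under the uniform design `α_w = 1` and `1̂_ht = 1`, so moreover `V̂_haj = V̂_ht`.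
-/

end SplitPlotPaper

namespace Matrix

variable {m κ : Type*} [Fintype m] [Fintype κ]

theorem PosSemidef.mul_eq_sqrt_smul_of_mul_mul_eq {Q : Matrix m m ℝ} (hQ : Q.PosSemidef)
    {X : Matrix m κ ℝ} {l : ℝ} (hl : 0 < l) (hX : Q * Q * X = l • X) :
    Q * X = √l • X := by
  set Y := Q * X - √l • X with hYdef
  have hQY : Q * Y = -√l • Y := by
    have hsq : √l * √l = l := Real.mul_self_sqrt hl.le
    rw [hYdef, Matrix.mul_sub, Matrix.mul_smul, ← Matrix.mul_assoc, hX, smul_sub, smul_smul,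
      neg_mul, hsq, neg_smul, neg_smul]
    abel
  -- `Yᴴ Q Y` is positive semidefinite, yet equals `-√l • Yᴴ Y`.
  have htrace : 0 ≤ -√l * (Yᴴ * Y).trace := by
    have := (hQ.conjTranspose_mul_mul_same Y).trace_nonneg
    rwa [Matrix.mul_assoc, hQY, Matrix.mul_smul, Matrix.trace_smul, smul_eq_mul] at this
  have hY : (Yᴴ * Y).trace = 0 :=
    le_antisymm (by nlinarith [Real.sqrt_pos.2 hl])
      (Matrix.posSemidef_conjTranspose_mul_self Y).trace_nonneg
  exact sub_eq_zero.1 (Matrix.trace_conjTranspose_mul_self_eq_zero_iff.1 hY)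

theorem one_sub_mul_one_add_smul [DecidableEq m] {P : Matrix m m ℝ} {c : ℝ} (hc : c ≠ 1)
    (hP : P * P = c • P) : (1 - P) * (1 + (1 - c)⁻¹ • P) = 1 := by
  have hgc : (1 - c)⁻¹ * c = (1 - c)⁻¹ - 1 := by
    field_simp [sub_ne_zero.2 hc.symm]
    ring
  simp only [sub_mul, mul_add, mul_one, one_mul, Matrix.mul_smul, hP, smul_smul, hgc, sub_smul,
    one_smul]
  abel

theorem transpose_mulVec_inv_mulVec_of_leverage [DecidableEq m] (D : Matrix m κ ℝ)
    (G : Matrix κ κ ℝ) {Q : Matrix m m ℝ} (hQ : Q.PosSemidef) (hQQ : Q * Q = 1 - D * G * Dᵀ)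
    {c : ℝ} (hc : c < 1) (hD : D * G * Dᵀ * D = c • D) (e : m → ℝ) :
    Dᵀ *ᵥ (Q⁻¹ *ᵥ e) = (√(1 - c))⁻¹ • (Dᵀ *ᵥ e) := by
  have hpos : 0 < 1 - c := sub_pos.2 hc
  have hQD : Q * D = √(1 - c) • D := by
    refine hQ.mul_eq_sqrt_smul_of_mul_mul_eq hpos ?_
    rw [hQQ, Matrix.sub_mul, Matrix.one_mul, hD, sub_smul, one_smul]
  have hPP : D * G * Dᵀ * (D * G * Dᵀ) = c • (D * G * Dᵀ) := by
    simp only [← Matrix.mul_assoc, hD, Matrix.smul_mul]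
  have hQunit : IsUnit Q.det := by
    have h := Matrix.isUnit_det_of_right_inverse (one_sub_mul_one_add_smul hc.ne hPP)
    rw [← hQQ, Matrix.det_mul] at h
    exact isUnit_of_mul_isUnit_left h
  have hQinvD : Q⁻¹ * D = (√(1 - c))⁻¹ • D := by
    rw [eq_inv_smul_iff₀ (Real.sqrt_pos.2 hpos).ne', ← Matrix.mul_smul, ← hQD,
      ← Matrix.mul_assoc, Matrix.nonsing_inv_mul _ hQunit, Matrix.one_mul]
  have hQt : Qᵀ = Q := by simpa using hQ.isHermitian.eq
  rw [Matrix.mulVec_mulVec, ← Matrix.transpose_transpose (Dᵀ * Q⁻¹), Matrix.transpose_mul,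
    Matrix.transpose_nonsing_inv, hQt, Matrix.transpose_transpose, hQinvD,
    Matrix.transpose_smul, Matrix.smul_mulVec]

theorem inv_diagonal_of_ne_zero [DecidableEq κ] {v : κ → ℝ} (hv : ∀ k, v k ≠ 0) :
    (diagonal v)⁻¹ = diagonal fun k => (v k)⁻¹ := by
  refine inv_eq_left_inv ?_
  rw [diagonal_mul_diagonal, ← diagonal_one]
  exact congrArg diagonal (funext fun k => inv_mul_cancel₀ (hv k))

end Matrix

namespace SplitPlotPaper

theorem inv_mul_inv_sqrt_one_sub_inv_mul_self {x : ℝ} (hx : 1 < x) :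
    x⁻¹ * (√(1 - x⁻¹))⁻¹ * (x⁻¹ * (√(1 - x⁻¹))⁻¹) = x⁻¹ * (x - 1)⁻¹ := by
  have hsq : √(1 - x⁻¹) * √(1 - x⁻¹) = 1 - x⁻¹ :=
    Real.mul_self_sqrt (sub_nonneg.2 (inv_le_one_of_one_le₀ hx.le))
  calc x⁻¹ * (√(1 - x⁻¹))⁻¹ * (x⁻¹ * (√(1 - x⁻¹))⁻¹)
      = x⁻¹ * (x * (√(1 - x⁻¹) * √(1 - x⁻¹)))⁻¹ := by ring
    _ = x⁻¹ * (x - 1)⁻¹ := by rw [hsq, mul_sub, mul_one, mul_inv_cancel₀ (by positivity)]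

theorem card_filter_eq_true_add_card_filter_eq_false {α : Type*} [Fintype α] (f : α → Bool) :
    #{x | f x = true} + #{x | f x = false} = Fintype.card α := by
  convert Finset.card_filter_add_card_filter_not (s := Finset.univ) (fun x => f x = true)
  · simp
  · exact Finset.card_univ.symm

section CellMatrix

variable {ι κ : Type*} [DecidableEq κ]

def cellMatrix (f : ι → κ) : Matrix ι κ ℝ := Matrix.of fun i k => if f i = k then 1 else 0

theorem transpose_cellMatrix_mulVec [Fintype ι] (f : ι → κ) (e : ι → ℝ) (k : κ) :
    ((cellMatrix f)ᵀ *ᵥ e) k = ∑ i with f i = k, e i := by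
  simp [cellMatrix, Matrix.mulVec, dotProduct, Finset.sum_filter]

theorem gram_cellMatrix [Fintype ι] (f : ι → κ) :
    gram (cellMatrix f) (fun _ => 1) = Matrix.diagonal fun k => (#{i | f i = k} : ℝ) := by
  ext k k'
  by_cases hk : k = k'
  · subst hk
    simp +contextual [gram, cellMatrix, Finset.sum_boole]
  · simp only [gram, cellMatrix, Matrix.of_apply, Matrix.diagonal_apply_ne _ hk]
    refine Finset.sum_eq_zero fun i _ => ?_
    by_cases hi : f i = k <;> simp [hi, hk]

theorem lsCoef_cellMatrix [Fintype ι] [Fintype κ] (f : ι → κ) (y : ι → ℝ)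
    (hf : ∀ k, #{i | f i = k} ≠ 0) (k : κ) :
    lsCoef (cellMatrix f) (fun _ => 1) y k = (#{i | f i = k} : ℝ)⁻¹ * ∑ i with f i = k, y i := by
  rw [lsCoef, gram_cellMatrix, Matrix.inv_diagonal_of_ne_zero fun k => Nat.cast_ne_zero.2 (hf k),
    Matrix.mulVec_diagonal]
  simp [cellMatrix, Finset.sum_filter]

theorem lsResid_cellMatrix [Fintype ι] [Fintype κ] (f : ι → κ) (π y : ι → ℝ) (i : ι) :
    lsResid (cellMatrix f) π y i = y i - lsCoef (cellMatrix f) π y (f i) := by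
  simp [lsResid, cellMatrix]

theorem cellMatrix_mul_diagonal_mul_transpose [Fintype κ] (f : ι → κ) (v : κ → ℝ) :
    cellMatrix f * Matrix.diagonal v * (cellMatrix f)ᵀ =
      Matrix.of fun s t => if f s = f t then v (f s) else 0 := by
  ext s t
  simp only [cellMatrix, Matrix.mul_apply, Matrix.diagonal_apply, Matrix.transpose_apply,
    Matrix.of_apply]
  by_cases h : f s = f t <;> simp [h, eq_comm]

theorem cellMatrix_mul_diagonal_mul_transpose_mul [Fintype ι] [Fintype κ] (f : ι → κ)
    (v : κ → ℝ) {c : ℝ} (h : ∀ s, v (f s) * #{t | f t = f s} = c) :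
    cellMatrix f * Matrix.diagonal v * (cellMatrix f)ᵀ * cellMatrix f = c • cellMatrix f := by
  ext s k
  rw [cellMatrix_mul_diagonal_mul_transpose, Matrix.mul_apply]
  simp only [cellMatrix, Matrix.of_apply, Matrix.smul_apply, smul_eq_mul]
  by_cases hk : f s = k
  · subst hk
    rw [if_pos rfl, mul_one, ← h s, Finset.natCast_card_filter, Finset.mul_sum]
    refine Finset.sum_congr rfl fun t _ => ?_
    by_cases ht : f t = f s <;> simp [ht]
  · rw [if_neg hk, mul_zero]
    refine Finset.sum_eq_zero fun t _ => ?_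
    by_cases ht : f t = k <;> simp [ht, hk]

end CellMatrix

theorem sum_ite_pair_eq (a : Bool) (z : T) (h : T → ℝ) :
    (∑ b, if (a, b) = z then h (a, b) else 0) = if a = z.1 then h z else 0 := by
  obtain ⟨a', b'⟩ := z
  by_cases ha : a = a' <;> simp [ha, Prod.ext_iff]

namespace Design

variable (d : Design) {ω : d.Assign}

section Counting

theorem W_pos : 0 < d.W := by
  have := d.hW0
  show 0 < d.W0 + d.W1
  omega

theorem M_pos (w : Fin d.W) : 0 < d.M w := by
  have := d.hM0 w
  show 0 < d.M0 w + d.M1 w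
  omega

theorem two_le_Wa (a : Bool) : 2 ≤ d.Wa a := by
  cases a
  · exact d.hW0
  · exact d.hW1

theorem two_le_Mb (w : Fin d.W) (b : Bool) : 2 ≤ d.Mb w b := by
  cases b
  · exact d.hM0 w
  · exact d.hM1 w

theorem one_lt_Wa (a : Bool) : (1 : ℝ) < d.Wa a := by
  exact_mod_cast d.two_le_Wa a

theorem Wa_ne_zero (a : Bool) : (d.Wa a : ℝ) ≠ 0 := (zero_lt_one.trans (d.one_lt_Wa a)).ne'

theorem Mb_ne_zero (w : Fin d.W) (b : Bool) : (d.Mb w b : ℝ) ≠ 0 :=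
  Nat.cast_ne_zero.2 (by have := d.two_le_Mb w b; omega)

theorem card_filter_fst_eq (hω : ω ∈ d.Ω) (a : Bool) : #{w | ω.1 w = a} = d.Wa a := by
  have hA := (Finset.mem_filter.1 hω).2.1
  have := card_filter_eq_true_add_card_filter_eq_false ω.1
  cases a
  · rw [Fintype.card_fin, hA] at this
    change d.W1 + _ = d.W0 + d.W1 at this
    simp only [Wa, Bool.false_eq_true, if_false]
    omega
  · exact hA

theorem card_filter_snd_eq (hω : ω ∈ d.Ω) (w : Fin d.W) (b : Bool) :
    #{s | ω.2 w s = b} = d.Mb w b := by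
  have hB := (Finset.mem_filter.1 hω).2.2 w
  have := card_filter_eq_true_add_card_filter_eq_false (ω.2 w)
  cases b
  · rw [Fintype.card_fin, hB] at this
    change d.M1 w + _ = d.M0 w + d.M1 w at this
    simp only [Mb, Bool.false_eq_true, if_false]
    omega
  · exact hB

theorem card_filter_Z_eq (hω : ω ∈ d.Ω) (w : Fin d.W) (z : T) :
    #{s | d.Z ω w s = z} = if ω.1 w = z.1 then d.Mb w z.2 else 0 := by
  split_ifs with h
  · rw [← d.card_filter_snd_eq hω w z.2]
    congr 1
    ext s
    simp [Z, Prod.ext_iff, h]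
  · exact Finset.card_eq_zero.2
      (Finset.filter_eq_empty_iff.2 fun s _ hs => h (congrArg Prod.fst hs))

theorem sum_ite_fst_eq {R : Type*} [NonAssocSemiring R] (hω : ω ∈ d.Ω) (a : Bool) (c : R) :
    (∑ w, if ω.1 w = a then c else 0) = d.Wa a * c := by
  rw [← Finset.sum_filter, Finset.sum_const, d.card_filter_fst_eq hω, nsmul_eq_mul]

end Counting

section Estimators

theorem ht_sum_eq (ω : d.Assign) (y : (w : Fin d.W) → Fin (d.M w) → ℝ) (z : T) :
    (d.N : ℝ)⁻¹ * ∑ w, ∑ s, (if d.Z ω w s = z then (d.prob w z)⁻¹ * y w s else 0) =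
      (d.Wa z.1 : ℝ)⁻¹ *
        ∑ w, d.alpha w * ((d.Mb w z.2 : ℝ)⁻¹ * ∑ s, if d.Z ω w s = z then y w s else 0) := by
  simp only [Finset.mul_sum, mul_ite, mul_zero]
  refine Finset.sum_congr rfl fun w _ => Finset.sum_congr rfl fun s _ => ?_
  split_ifs
  · simp only [prob, p, q, alpha, mul_inv, inv_div]
    ring
  · rfl

theorem Yht_eq_sum_Uw (ω : d.Assign) (z : T) :
    d.Yht ω z = (d.Wa z.1 : ℝ)⁻¹ * ∑ w, d.Uw ω w z :=
  d.ht_sum_eq ω (d.Yobs ω) z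

theorem sum_ite_Z_Yobs_eq (ω : d.Assign) (w : Fin d.W) (z : T) :
    (∑ s, if d.Z ω w s = z then d.Yobs ω w s else 0) = d.Mb w z.2 * d.Yw ω w z := by
  rw [Yw, mul_inv_cancel_left₀ (d.Mb_ne_zero w z.2)]

theorem Yw_eq_zero_of_ne (ω : d.Assign) {w : Fin d.W} {z : T} (h : ω.1 w ≠ z.1) :
    d.Yw ω w z = 0 := by
  simp [Yw, Z, Prod.ext_iff, h]

theorem alpha_eq_one {m : ℕ} (hM : ∀ w, d.M w = m) (w : Fin d.W) : d.alpha w = 1 := by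
  have hN : d.N = d.W * m := by simp [N, hM]
  have hm : 0 < m := hM w ▸ d.M_pos w
  have hW := d.W_pos
  rw [alpha, hN, hM, Nat.cast_mul, div_self (by positivity)]

theorem oneHt_eq_one (hω : ω ∈ d.Ω) {m : ℕ} (hM : ∀ w, d.M w = m) (z : T) :
    d.oneHt ω z = 1 := by
  have h := d.ht_sum_eq ω (fun _ _ => 1) z
  simp only [mul_one] at h
  rw [oneHt, h]
  calc _ = (d.Wa z.1 : ℝ)⁻¹ * ∑ w, if ω.1 w = z.1 then 1 else 0 := by
        congr 1
        refine Finset.sum_congr rfl fun w _ => ?_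
        rw [Finset.sum_boole, d.card_filter_Z_eq hω, d.alpha_eq_one hM, one_mul]
        split_ifs
        · exact inv_mul_cancel₀ (d.Mb_ne_zero w z.2)
        · simp
    _ = 1 := by rw [d.sum_ite_fst_eq hω, mul_one, inv_mul_cancel₀ (d.Wa_ne_zero z.1)]

theorem Vhaj_eq_Vht (hω : ω ∈ d.Ω) {m : ℕ} (hM : ∀ w, d.M w = m) : d.Vhaj ω = d.Vht ω := by
  have hYhaj : d.Yhaj ω = d.Yht ω :=
    funext fun z => by rw [Yhaj, d.oneHt_eq_one hω hM, div_one]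
  ext z z'
  simp [Vhaj, Vht, ShajHat, ShtHat, hYhaj, d.alpha_eq_one hM]

/-- The residual `Û_w(z) − Ŷ_ht(z)` of whole-plot `w` in the aggregate regression, extended by
zero to the cells off the A-level of `w`. -/
def plotResid (ω : d.Assign) (w : Fin d.W) (z : T) : ℝ :=
  if ω.1 w = z.1 then d.Uw ω w z - d.Yht ω z else 0

theorem diagonal_mul_sum_mul_diagonal_eq_Vht (g : T → ℝ) (u : Fin d.W → T → ℝ)
    (hu : ∀ w z, g z * u w z =
      (d.Wa z.1 : ℝ)⁻¹ * ((√(1 - (d.Wa (ω.1 w) : ℝ)⁻¹))⁻¹ * d.plotResid ω w z)) :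
    Matrix.diagonal g * Matrix.of (fun z z' => ∑ w, u w z * u w z') * Matrix.diagonal g =
      d.Vht ω := by
  ext z z'
  rw [Matrix.mul_diagonal, Matrix.diagonal_mul, Matrix.of_apply, Finset.mul_sum, Finset.sum_mul]
  have hterm : ∀ w, g z * (u w z * u w z') * g z' = (g z * u w z) * (g z' * u w z') :=
    fun w => by ring
  simp only [Vht, ShtHat, Matrix.of_apply, hterm, hu, plotResid, Uw]
  split_ifs with hzz
  · rw [Finset.mul_sum, Finset.mul_sum]
    refine Finset.sum_congr rfl fun w _ => ?_
    rw [← hzz]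
    split_ifs with h
    · rw [← h]
      linear_combination (d.alpha w * d.Yw ω w z - d.Yht ω z) *
        (d.alpha w * d.Yw ω w z' - d.Yht ω z') *
        inv_mul_inv_sqrt_one_sub_inv_mul_self (d.one_lt_Wa (ω.1 w))
    · simp
  · refine Finset.sum_eq_zero fun w _ => ?_
    split_ifs with h1 h2
    · exact absurd (h1.symm.trans h2) hzz
    all_goals simp

end Estimators

section Aggregate

theorem Dag_eq_cellMatrix (ω : d.Assign) : d.Dag ω = cellMatrix fun i => (ω.1 i.1, i.2) := rfl

theorem DagBlock_eq_cellMatrix (ω : d.Assign) (w : Fin d.W) :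
    d.DagBlock ω w = cellMatrix fun b => (ω.1 w, b) := rfl

theorem card_filter_agg_cell (hω : ω ∈ d.Ω) (z : T) :
    #{i : d.AgIdx | (ω.1 i.1, i.2) = z} = d.Wa z.1 := by
  rw [← d.card_filter_fst_eq hω]
  refine Finset.card_nbij' (fun i => i.1) (fun w => (w, z.2)) ?_ ?_ ?_ ?_ <;>
    simp +contextual [Set.MapsTo, Set.LeftInvOn, Set.RightInvOn, Prod.ext_iff]

theorem inv_gram_Dag (hω : ω ∈ d.Ω) :
    (gram (d.Dag ω) fun _ => 1)⁻¹ = Matrix.diagonal fun z => (d.Wa z.1 : ℝ)⁻¹ := by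
  rw [Dag_eq_cellMatrix, gram_cellMatrix,
    Matrix.inv_diagonal_of_ne_zero (by simp [d.card_filter_agg_cell hω, d.Wa_ne_zero])]
  simp [d.card_filter_agg_cell hω]

theorem lsCoef_Dag (hω : ω ∈ d.Ω) : lsCoef (d.Dag ω) (fun _ => 1) (d.Uag ω) = d.Yht ω := by
  funext z
  rw [Dag_eq_cellMatrix, lsCoef_cellMatrix, d.card_filter_agg_cell hω, Yht_eq_sum_Uw,
    Finset.sum_filter, Fintype.sum_prod_type]
  · congr 1
    refine Finset.sum_congr rfl fun w _ => ?_
    refine (sum_ite_pair_eq (ω.1 w) z (d.Uw ω w)).trans (ite_eq_left_iff.2 fun h => ?_)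
    rw [Uw, d.Yw_eq_zero_of_ne ω h, mul_zero]
  · intro z
    have := d.two_le_Wa z.1
    rw [d.card_filter_agg_cell hω]
    omega

theorem transpose_DagBlock_mulVec_eAg (hω : ω ∈ d.Ω) (w : Fin d.W) :
    (d.DagBlock ω w)ᵀ *ᵥ d.eAg ω w = d.plotResid ω w := by
  funext z
  have he : d.eAg ω w = fun b => d.Uw ω w (ω.1 w, b) - d.Yht ω (ω.1 w, b) := by
    funext b
    rw [eAg, Dag_eq_cellMatrix, lsResid_cellMatrix, ← Dag_eq_cellMatrix, d.lsCoef_Dag hω]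
    rfl
  rw [DagBlock_eq_cellMatrix, transpose_cellMatrix_mulVec, Finset.sum_filter, he]
  exact sum_ite_pair_eq (ω.1 w) z fun z => d.Uw ω w z - d.Yht ω z

theorem DagBlock_leverage (hω : ω ∈ d.Ω) (w : Fin d.W) :
    d.DagBlock ω w * (gram (d.Dag ω) fun _ => 1)⁻¹ * (d.DagBlock ω w)ᵀ * d.DagBlock ω w =
      (d.Wa (ω.1 w) : ℝ)⁻¹ • d.DagBlock ω w := by
  rw [d.inv_gram_Dag hω]
  exact cellMatrix_mul_diagonal_mul_transpose_mul _ _ fun b => by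
    simp [Prod.ext_iff, Finset.filter_eq']

theorem Vag2_eq_Vht (hω : ω ∈ d.Ω) {Q : Fin d.W → Matrix Bool Bool ℝ}
    (hQ : ∀ w, (Q w).PosSemidef ∧ Q w * Q w = 1 - d.PagBlock ω w) : d.Vag2 ω Q = d.Vht ω := by
  have hu : ∀ w, (d.DagBlock ω w)ᵀ *ᵥ ((Q w)⁻¹ *ᵥ d.eAg ω w) =
      (√(1 - (d.Wa (ω.1 w) : ℝ)⁻¹))⁻¹ • d.plotResid ω w := fun w => by
    rw [Matrix.transpose_mulVec_inv_mulVec_of_leverage _ _ (hQ w).1 (hQ w).2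
      (inv_lt_one_of_one_lt₀ (d.one_lt_Wa _)) (d.DagBlock_leverage hω w),
      d.transpose_DagBlock_mulVec_eAg hω]
  rw [Vag2, d.inv_gram_Dag hω]
  exact d.diagonal_mul_sum_mul_diagonal_eq_Vht _ _ fun w z => by simp [hu]

end Aggregate

section Unit

variable {mb : Bool → ℕ}

theorem natCast_ne_zero_of_Mb_eq (hmb : ∀ w b, d.Mb w b = mb b) (b : Bool) : (mb b : ℝ) ≠ 0 :=
  hmb ⟨0, d.W_pos⟩ b ▸ d.Mb_ne_zero _ b

theorem M_eq_of_Mb_eq (hmb : ∀ w b, d.Mb w b = mb b) (w : Fin d.W) :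
    d.M w = mb false + mb true := by
  rw [← hmb w false, ← hmb w true]
  rfl

theorem Dunit_eq_cellMatrix (ω : d.Assign) : d.Dunit ω = cellMatrix fun i => d.Z ω i.1 i.2 :=
  rfl

theorem DunitBlock_eq_cellMatrix (ω : d.Assign) (w : Fin d.W) :
    d.DunitBlock ω w = cellMatrix fun s => d.Z ω w s := rfl

theorem card_filter_unit_cell (hω : ω ∈ d.Ω) (hmb : ∀ w b, d.Mb w b = mb b) (z : T) :
    #{i : d.Idx | d.Z ω i.1 i.2 = z} = d.Wa z.1 * mb z.2 := by
  rw [Finset.card_filter, Fintype.sum_sigma]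
  simp_rw [← Finset.card_filter, d.card_filter_Z_eq hω, hmb]
  exact d.sum_ite_fst_eq hω z.1 (mb z.2)

theorem inv_gram_Dunit (hω : ω ∈ d.Ω) (hmb : ∀ w b, d.Mb w b = mb b) :
    (gram (d.Dunit ω) fun _ => 1)⁻¹ = Matrix.diagonal fun z => ((d.Wa z.1 : ℝ) * mb z.2)⁻¹ := by
  rw [Dunit_eq_cellMatrix, gram_cellMatrix, Matrix.inv_diagonal_of_ne_zero fun z => ?_]
  · simp [d.card_filter_unit_cell hω hmb]
  · simp [d.card_filter_unit_cell hω hmb, d.Wa_ne_zero, d.natCast_ne_zero_of_Mb_eq hmb]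

theorem lsCoef_Dunit (hω : ω ∈ d.Ω) (hmb : ∀ w b, d.Mb w b = mb b) :
    lsCoef (d.Dunit ω) (fun _ => 1) (d.Yv ω) = d.Yht ω := by
  funext z
  rw [Dunit_eq_cellMatrix, lsCoef_cellMatrix, d.card_filter_unit_cell hω hmb, Yht_eq_sum_Uw,
    Finset.sum_filter, Fintype.sum_sigma]
  · simp only [Yv, d.sum_ite_Z_Yobs_eq, Uw, d.alpha_eq_one (d.M_eq_of_Mb_eq hmb), hmb, one_mul,
      ← Finset.mul_sum]
    rw [Nat.cast_mul, mul_inv, mul_assoc, inv_mul_cancel_left₀ (d.natCast_ne_zero_of_Mb_eq hmb _)]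
  · intro z
    rw [d.card_filter_unit_cell hω hmb]
    exact mul_ne_zero (by have := d.two_le_Wa z.1; omega)
      (Nat.cast_ne_zero.1 (d.natCast_ne_zero_of_Mb_eq hmb z.2))

theorem transpose_DunitBlock_mulVec_eUnit (hω : ω ∈ d.Ω) (hmb : ∀ w b, d.Mb w b = mb b)
    (w : Fin d.W) :
    (d.DunitBlock ω w)ᵀ *ᵥ d.eUnit ω w = fun z => mb z.2 * d.plotResid ω w z := by
  funext z
  have he : ∀ s ∈ ({s | d.Z ω w s = z} : Finset _),
      d.eUnit ω w s = d.Yobs ω w s - d.Yht ω z := by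
    intro s hs
    rw [eUnit, Dunit_eq_cellMatrix, lsResid_cellMatrix, ← Dunit_eq_cellMatrix,
      d.lsCoef_Dunit hω hmb, (Finset.mem_filter.1 hs).2]
    rfl
  rw [DunitBlock_eq_cellMatrix, transpose_cellMatrix_mulVec, Finset.sum_congr rfl he,
    Finset.sum_sub_distrib, Finset.sum_const, nsmul_eq_mul, Finset.sum_filter,
    d.sum_ite_Z_Yobs_eq, d.card_filter_Z_eq hω, plotResid]
  split_ifs with h
  · rw [Uw, d.alpha_eq_one (d.M_eq_of_Mb_eq hmb), hmb]
    ring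
  · rw [d.Yw_eq_zero_of_ne ω h]
    simp

theorem DunitBlock_leverage (hω : ω ∈ d.Ω) (hmb : ∀ w b, d.Mb w b = mb b) (w : Fin d.W) :
    d.DunitBlock ω w * (gram (d.Dunit ω) fun _ => 1)⁻¹ * (d.DunitBlock ω w)ᵀ * d.DunitBlock ω w =
      (d.Wa (ω.1 w) : ℝ)⁻¹ • d.DunitBlock ω w := by
  rw [d.inv_gram_Dunit hω hmb, DunitBlock_eq_cellMatrix]
  refine cellMatrix_mul_diagonal_mul_transpose_mul _ _ fun s => ?_
  rw [d.card_filter_Z_eq hω]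
  simp only [Z, if_true, hmb, mul_inv]
  exact inv_mul_cancel_right₀ (d.natCast_ne_zero_of_Mb_eq hmb _) _

theorem Vols2_eq_Vht (hω : ω ∈ d.Ω) (hmb : ∀ w b, d.Mb w b = mb b)
    {Q : (w : Fin d.W) → Matrix (Fin (d.M w)) (Fin (d.M w)) ℝ}
    (hQ : ∀ w, (Q w).PosSemidef ∧ Q w * Q w = 1 - d.PunitBlock ω w) : d.Vols2 ω Q = d.Vht ω := by
  have hu : ∀ w, (d.DunitBlock ω w)ᵀ *ᵥ ((Q w)⁻¹ *ᵥ d.eUnit ω w) =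
      (√(1 - (d.Wa (ω.1 w) : ℝ)⁻¹))⁻¹ • fun z => mb z.2 * d.plotResid ω w z := fun w => by
    rw [Matrix.transpose_mulVec_inv_mulVec_of_leverage _ _ (hQ w).1 (hQ w).2
      (inv_lt_one_of_one_lt₀ (d.one_lt_Wa _)) (d.DunitBlock_leverage hω hmb w),
      d.transpose_DunitBlock_mulVec_eUnit hω hmb]
  rw [Vols2, d.inv_gram_Dunit hω hmb]
  refine d.diagonal_mul_sum_mul_diagonal_eq_Vht _ _ fun w z => ?_
  rw [hu, Pi.smul_apply, smul_eq_mul, mul_inv]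
  field_simp [d.natCast_ne_zero_of_Mb_eq hmb]

end Unit

end Design

/-- The HC2 cluster-robust covariance of the aggregate regression
recovers `V̂_ht` exactly: `Ṽ_ag2 = V̂_ht` for every realization of the assignment; and
under the uniform design condition `Ṽ_ols2 = Ṽ_ag2 = V̂`, where `V̂` is the common value
of `V̂_ht` and `V̂_haj`.  Here `(I−P_w)^{-1/2}` is expressed as `(Q w)⁻¹` for the (unique)
positive-semidefinite square root `Q w` of `I − P_w`. -/
theorem hc2_recovers_vht (d : Design) (ω : d.Assign) (hω : ω ∈ d.Ω) :
    (∀ Q : Fin d.W → Matrix Bool Bool ℝ,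
      (∀ w, (Q w).PosSemidef ∧ Q w * Q w = 1 - d.PagBlock ω w) →
        d.Vag2 ω Q = d.Vht ω) ∧
    ((∃ Mc0 Mc1 : ℕ, (∀ w, d.M0 w = Mc0) ∧ (∀ w, d.M1 w = Mc1)) →
      d.Vhaj ω = d.Vht ω ∧
      (∀ Qu : (w : Fin d.W) → Matrix (Fin (d.M w)) (Fin (d.M w)) ℝ,
        (∀ w, (Qu w).PosSemidef ∧ Qu w * Qu w = 1 - d.PunitBlock ω w) →
          d.Vols2 ω Qu = d.Vht ω)) := by
  refine ⟨fun Q hQ => d.Vag2_eq_Vht hω hQ, ?_⟩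
  rintro ⟨m0, m1, hm0, hm1⟩
  have hmb : ∀ w b, d.Mb w b = if b then m1 else m0 := fun w b => by
    cases b <;> simp [Design.Mb, hm0, hm1]
  exact ⟨d.Vhaj_eq_Vht hω (d.M_eq_of_Mb_eq hmb), fun Q hQ => d.Vols2_eq_Vht hω hmb hQ⟩

end SplitPlotPaper
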